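/- arXiv:math/0607704 — 2 statements merged into one kernel-verified Lean document; each statement's English description precedes it below -/
import Mathlib

section
/- For every nonnegative column-allowable 2×2 real matrix A = [[a,b],[c,d]], the supremum of d_columns(AA')/d_columns(A') over all nonnegative column-allowable 2×2 matrices A' with d_columns(A') ≠ 0 equals |det A| / min((a+c)², (b+d)²). -/
open Matrix

/-- A 2×2 real matrix is nonnegative and column-allowable. -/
def ColAllowable (A : Matrix (Fin 2) (Fin 2) ℝ) : Prop :=
  (∀ i j, 0 ≤ A i j) ∧ 0 < A 0 0 + A 1 0 ∧ 0 < A 0 1 + A 1 1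

/-- The distance between the (normalized) columns of `A`. -/
noncomputable def dcols (A : Matrix (Fin 2) (Fin 2) ℝ) : ℝ :=
  |A.det| / ((A 0 0 + A 1 0) * (A 0 1 + A 1 1))

/-!
Write `p, q` for the column sums of `A`. Since `det (A B) = det A * det B` and the column sums of
`A B` are `p s + q u` and `p t + q v` for the columns `(s, u)`, `(t, v)` of `B`, the ratio
`dcols (A B) / dcols B` equals `|det A| (s + u) (t + v) / ((p s + q u) (p t + q v))`. Each factor
of the denominator is at least `min p q` times the matching factor of the numerator, which gives
the upper bound. If `p ≤ q`, the matrices `!![1, 1; e, 0]` have both columns concentrated on the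
first row as `e → 0⁺`, and their ratios `|det A| (1 + e) / ((p + q e) p)` tend to `|det A| / p²`;
symmetrically with `!![e, 0; 1, 1]` if `q ≤ p`.
-/

open Filter Topology

theorem min_pow_eq_pow_min {R : Type*} [Semiring R] [LinearOrder R] [IsOrderedRing R] {a b : R}
    (ha : 0 ≤ a) (hb : 0 ≤ b) (n : ℕ) : min (a ^ n) (b ^ n) = min a b ^ n := by
  rcases le_total a b with h | h
  · rw [min_eq_left h, min_eq_left (pow_le_pow_left₀ ha h n)]
  · rw [min_eq_right h, min_eq_right (pow_le_pow_left₀ hb h n)]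

def colSum {R : Type*} [Add R] (A : Matrix (Fin 2) (Fin 2) R) (j : Fin 2) : R :=
  A 0 j + A 1 j

theorem colSum_mul {R : Type*} [NonUnitalNonAssocSemiring R] (A B : Matrix (Fin 2) (Fin 2) R)
    (j : Fin 2) : colSum (A * B) j = colSum A 0 * B 0 j + colSum A 1 * B 1 j := by
  simp only [colSum, mul_apply, Fin.sum_univ_two, add_mul]
  abel

theorem dcols_mul_div_dcols (A B : Matrix (Fin 2) (Fin 2) ℝ) (hB : dcols B ≠ 0) :
    dcols (A * B) / dcols B =
      |A.det| * (colSum B 0 * colSum B 1) / (colSum (A * B) 0 * colSum (A * B) 1) := by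
  obtain ⟨hdet, hsum⟩ := div_ne_zero_iff.mp hB
  simp only [dcols, colSum, det_mul, abs_mul] at *
  field_simp

theorem dcols_mul_div_dcols_le {A B : Matrix (Fin 2) (Fin 2) ℝ} {m : ℝ} (hm : 0 < m)
    (hm₀ : m ≤ colSum A 0) (hm₁ : m ≤ colSum A 1) (hB : ColAllowable B) (hdB : dcols B ≠ 0) :
    dcols (A * B) / dcols B ≤ |A.det| / m ^ 2 := by
  obtain ⟨hBnonneg, hB₀, hB₁⟩ := hB
  have hcol (j : Fin 2) : m * colSum B j ≤ colSum (A * B) j := by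
    rw [colSum_mul, colSum, mul_add]
    gcongr <;> apply hBnonneg
  have hσ : 0 < colSum B 0 := hB₀
  have hτ : 0 < colSum B 1 := hB₁
  calc dcols (A * B) / dcols B
      = |A.det| * (colSum B 0 * colSum B 1) / (colSum (A * B) 0 * colSum (A * B) 1) :=
        dcols_mul_div_dcols A B hdB
    _ ≤ |A.det| * (colSum B 0 * colSum B 1) / ((m * colSum B 0) * (m * colSum B 1)) := by
        gcongr
        · exact (mul_pos hm hσ).le.trans (hcol 0)
        · exact hcol 0
        · exact hcol 1
    _ = |A.det| / m ^ 2 := by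
        field_simp

theorem div_sq_le_of_forall_pos {D p q b : ℝ} (hp : 0 < p)
    (h : ∀ e > 0, D * (1 + e) / ((p + q * e) * p) ≤ b) : D / p ^ 2 ≤ b := by
  have hcont : ContinuousAt (fun e => D * (1 + e) / ((p + q * e) * p)) 0 := by
    fun_prop (disch := simp [hp.ne'])
  have hlim : Tendsto (fun e => D * (1 + e) / ((p + q * e) * p)) (𝓝[>] 0) (𝓝 (D / p ^ 2)) := by
    convert hcont.tendsto.mono_left nhdsWithin_le_nhds using 2
    ring
  exact le_of_tendsto hlim (eventually_nhdsWithin_of_forall h)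

def dcolsRatios (A : Matrix (Fin 2) (Fin 2) ℝ) : Set ℝ :=
  (fun B => dcols (A * B) / dcols B) '' {B | ColAllowable B ∧ dcols B ≠ 0}

theorem mem_dcolsRatios_of_pos (A : Matrix (Fin 2) (Fin 2) ℝ) {e : ℝ} (he : 0 < e) :
    |A.det| * (1 + e) / ((colSum A 0 + colSum A 1 * e) * colSum A 0) ∈ dcolsRatios A ∧
      |A.det| * (1 + e) / ((colSum A 1 + colSum A 0 * e) * colSum A 1) ∈ dcolsRatios A := by
  have h₁ : dcols !![1, 1; e, 0] ≠ 0 := by simp [dcols, he.ne']; positivity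
  have h₂ : dcols !![e, 0; 1, 1] ≠ 0 := by simp [dcols, he.ne']; positivity
  refine ⟨⟨_, ⟨⟨fun i j => ?_, ?_, ?_⟩, h₁⟩, ?_⟩, ⟨_, ⟨⟨fun i j => ?_, ?_, ?_⟩, h₂⟩, ?_⟩⟩
  · fin_cases i <;> fin_cases j <;> simp [he.le]
  · change (0:ℝ) < 1 + e; linarith
  · norm_num
  · beta_reduce
    rw [dcols_mul_div_dcols A _ h₁, colSum_mul, colSum_mul]
    simp [colSum]
  · fin_cases i <;> fin_cases j <;> simp [he.le]
  · change (0:ℝ) < e + 1; linarith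
  · norm_num
  · beta_reduce
    rw [dcols_mul_div_dcols A _ h₂, colSum_mul, colSum_mul]
    simp [colSum]
    ring

theorem stmt2 (A : Matrix (Fin 2) (Fin 2) ℝ) (hA : ColAllowable A) :
    sSup ((fun B => dcols (A * B) / dcols B) '' {B | ColAllowable B ∧ dcols B ≠ 0}) =
      |A.det| / min ((A 0 0 + A 1 0) ^ 2) ((A 0 1 + A 1 1) ^ 2) := by
  have hp : 0 < colSum A 0 := hA.2.1
  have hq : 0 < colSum A 1 := hA.2.2
  have hupper : |A.det| / min (colSum A 0) (colSum A 1) ^ 2 ∈ upperBounds (dcolsRatios A) := by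
    rintro _ ⟨B, ⟨hB, hdB⟩, rfl⟩
    exact dcols_mul_div_dcols_le (lt_min hp hq) (min_le_left _ _) (min_le_right _ _) hB hdB
  have hlower :
      |A.det| / min (colSum A 0) (colSum A 1) ^ 2 ∈ lowerBounds (upperBounds (dcolsRatios A)) := by
    intro b hb
    rcases le_total (colSum A 0) (colSum A 1) with h | h
    · rw [min_eq_left h]
      exact div_sq_le_of_forall_pos hp fun e he => hb (mem_dcolsRatios_of_pos A he).1
    · rw [min_eq_right h]
      exact div_sq_le_of_forall_pos hq fun e he => hb (mem_dcolsRatios_of_pos A he).2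
  change sSup (dcolsRatios A) = |A.det| / min (colSum A 0 ^ 2) (colSum A 1 ^ 2)
  rw [min_pow_eq_pow_min hp.le hq.le]
  exact IsLUB.csSup_eq ⟨hupper, hlower⟩ ⟨_, (mem_dcolsRatios_of_pos A one_pos).1⟩
end

section
/- Suppose M satisfies: every matrix [[a,b],[0,d]] ∈ M has a ≥ d; every matrix [[a,0],[c,d]] ∈ M has a > d; and no matrix in M has top-left entry 0 (no matrix of the form [[0,b],[c,d]]). Then for every vector V = (v₁,v₂) with v₁, v₂ > 0, the sequence of maps ω ↦ N(Pₙ(ω)V) converges uniformly on S^ℕ. -/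
open Matrix Filter

/-- `n(X) = x₁/(x₁+x₂)`. -/
noncomputable def nv (X : Fin 2 → ℝ) : ℝ := X 0 / (X 0 + X 1)

/-- The normalized vector `N(X)`. -/
noncomputable def Nv (X : Fin 2 → ℝ) : Fin 2 → ℝ := ![nv X, 1 - nv X]

/-- `Pₙ(ω) = M_{ω₁} M_{ω₂} ⋯ M_{ωₙ}`. -/
def Pprod {s : ℕ} (M : Fin s → Matrix (Fin 2) (Fin 2) ℝ) (ω : ℕ → Fin s) (n : ℕ) :
    Matrix (Fin 2) (Fin 2) ℝ :=
  ((List.range n).map (fun i => M (ω i))).prod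

/- Writing `ψₖ(v) = (c + d v) / (a + b v)` for the action of `M k = [[a, b], [c, d]]` on ratios
`x₂ / x₁`, the ratio of `Pₙ(ω) V` is `ψ_{ω₀} ∘ ⋯ ∘ ψ_{ω_{n-1}} (v₂ / v₁)`. Some `[0, B]` containing
`v₂ / v₁` is invariant under every `ψₖ`, so it suffices that the images of `[0, B]` under long
words shrink uniformly. A letter with `c > 0` maps `[0, W]` to a set of log-diameter at most `κ W`
and contracts the log-distance on `(0, B]` by a uniform factor `θ < 1`. A letter with `c = 0` does
not expand the log-distance (or is constant) and satisfies `ψ(v) ≤ v / (1 + δ v)`, so a run of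
`q` of them pushes `[0, B]` into `[0, B / (1 + q δ B)]`. A word of length `q (p + 1)` contains
either `p + 1` letters with `c > 0` or a run of `q` letters with `c = 0`. -/

open Real Set Topology

lemma abs_inv_one_add_sub_le {x y : ℝ} (hx : 0 ≤ x) (hy : 0 ≤ y) :
    |(1 + x)⁻¹ - (1 + y)⁻¹| ≤ |x - y| := by
  rw [inv_sub_inv (by positivity) (by positivity), abs_div, abs_sub_comm (1 + y),
    add_sub_add_left_eq_sub, abs_of_pos (by positivity : 0 < (1 + x) * (1 + y))]
  exact div_le_self (abs_nonneg _) (by nlinarith)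

lemma abs_inv_one_add_sub_le_abs_log_sub {x y : ℝ} (hx : 0 < x) (hy : 0 < y) :
    |(1 + x)⁻¹ - (1 + y)⁻¹| ≤ |log x - log y| := by
  wlog hxy : y ≤ x generalizing x y
  · rw [abs_sub_comm, abs_sub_comm (log x)]
    exact this hy hx (le_of_not_ge hxy)
  have hdiff : (1 + y)⁻¹ - (1 + x)⁻¹ = (x - y) / ((1 + x) * (1 + y)) := by
    field_simp
    ring
  have hlog : 1 - (x / y)⁻¹ ≤ log x - log y := by
    rw [← log_div hx.ne' hy.ne']
    exact one_sub_inv_le_log_of_pos (by positivity)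
  have hle : (x - y) / ((1 + x) * (1 + y)) ≤ 1 - (x / y)⁻¹ := by
    rw [inv_div, one_sub_div hx.ne']
    exact div_le_div_of_nonneg_left (sub_nonneg.2 hxy) hx (by nlinarith)
  have hnonneg : 0 ≤ (x - y) / ((1 + x) * (1 + y)) :=
    div_nonneg (sub_nonneg.2 hxy) (by positivity)
  rw [abs_sub_comm, hdiff, abs_of_nonneg hnonneg, abs_of_nonneg (by linarith)]
  linarith

lemma abs_log_add_mul_sub_le {c d x y : ℝ} (hc : 0 < c) (hd : 0 ≤ d) (hx : 0 ≤ x)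
    (hy : 0 ≤ y) :
    |log (c + d * x) - log (c + d * y)| ≤ d / c * |x - y| := by
  wlog hxy : y ≤ x generalizing x y
  · rw [abs_sub_comm, abs_sub_comm x]
    exact this hy hx (le_of_not_ge hxy)
  have hmono : log (c + d * y) ≤ log (c + d * x) :=
    log_le_log (by positivity) (by nlinarith)
  have hbound : log (c + d * x) - log (c + d * y) ≤ (c + d * x) / (c + d * y) - 1 := by
    rw [← log_div (by positivity) (by positivity)]
    exact log_le_sub_one_of_pos (by positivity)
  have hquot : (c + d * x) / (c + d * y) - 1 ≤ d / c * (x - y) := by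
    rw [div_sub_one (by positivity), div_mul_eq_mul_div,
      show c + d * x - (c + d * y) = d * (x - y) by ring]
    exact div_le_div_of_nonneg_left (by nlinarith) hc (by nlinarith)
  rw [abs_of_nonneg (by linarith), abs_of_nonneg (by linarith)]
  linarith

lemma abs_log_div_sub_le_mul_abs_sub {a b c d x y : ℝ} (ha : 0 < a) (hb : 0 ≤ b) (hc : 0 < c)
    (hd : 0 ≤ d) (hx : 0 ≤ x) (hy : 0 ≤ y) :
    |log ((c + d * x) / (a + b * x)) - log ((c + d * y) / (a + b * y))| ≤
      (d / c + b / a) * |x - y| := by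
  rw [log_div (by positivity) (by positivity), log_div (by positivity) (by positivity),
    sub_sub_sub_comm, add_mul]
  exact (abs_sub _ _).trans
    (add_le_add (abs_log_add_mul_sub_le hc hd hx hy) (abs_log_add_mul_sub_le ha hb hx hy))

lemma abs_log_div_sub_le_mul_abs_log_sub {a b c d B x y : ℝ} (ha : 0 < a) (hb : 0 ≤ b)
    (hc : 0 ≤ c) (hd : 0 ≤ d) (hS : 0 < a * d + b * c) (hB : 0 < B)
    (hx : 0 < x) (hxB : x ≤ B) (hy : 0 < y) (hyB : y ≤ B) :
    |log ((c + d * x) / (a + b * x)) - log ((c + d * y) / (a + b * y))| ≤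
      (a * d + b * c) * B / ((a * d + b * c) * B + a * c) * |log x - log y| := by
  set S := a * d + b * c
  have hnum : ∀ E : ℝ, 0 < E → 0 < c + d * E := fun E hE => by
    rcases hc.eq_or_lt with rfl | hc
    · have : 0 < d := by nlinarith
      positivity
    · positivity
  let H : ℝ → ℝ := fun u => log (c + d * exp u) - log (a + b * exp u)
  have hH : ∀ v, 0 < v → H (log v) = log ((c + d * v) / (a + b * v)) := fun v hv => by
    simp only [H, exp_log hv]
    rw [log_div (hnum v hv).ne' (by positivity)]
  have hderiv : ∀ u ∈ Iic (log B), HasDerivWithinAt H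
      (d * exp u / (c + d * exp u) - b * exp u / (a + b * exp u)) (Iic (log B)) u :=
    fun u _ => ((((hasDerivAt_exp u).const_mul d).const_add c).log (hnum _ (exp_pos u)).ne' |>.sub
      ((((hasDerivAt_exp u).const_mul b).const_add a).log (by positivity))).hasDerivWithinAt
  have hbound : ∀ u ∈ Iic (log B),
      ‖d * exp u / (c + d * exp u) - b * exp u / (a + b * exp u)‖ ≤
        S * B / (S * B + a * c) := by
    intro u hu
    have hEB : exp u ≤ B := (exp_le_exp.2 hu).trans_eq (exp_log hB)
    set E := exp u
    have hE : 0 < E := exp_pos u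
    have hnumE := hnum E hE
    have hform : d * E / (c + d * E) - b * E / (a + b * E) =
        E * (a * d - b * c) / ((c + d * E) * (a + b * E)) := by
      field_simp
      ring
    have hdet : |E * (a * d - b * c)| ≤ S * E := by
      rw [abs_mul, abs_of_pos hE, mul_comm]
      exact mul_le_mul_of_nonneg_right (abs_le.2 ⟨by nlinarith, by nlinarith⟩) hE.le
    calc ‖d * E / (c + d * E) - b * E / (a + b * E)‖
        = |E * (a * d - b * c)| / ((c + d * E) * (a + b * E)) := by
          rw [hform, Real.norm_eq_abs, abs_div,
            abs_of_pos (a := (c + d * E) * (a + b * E)) (by positivity)]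
      _ ≤ S * E / (S * E + a * c) := by
          apply div_le_div₀ (by positivity) hdet (by positivity)
          nlinarith [mul_nonneg (mul_nonneg hb hd) (mul_nonneg hE.le hE.le)]
      _ ≤ S * B / (S * B + a * c) := by
          rw [div_le_div_iff₀ (by positivity) (by positivity)]
          nlinarith [mul_le_mul_of_nonneg_left hEB (mul_nonneg hS.le (mul_nonneg ha.le hc))]
  have hmvt := (convex_Iic (log B)).norm_image_sub_le_of_norm_hasDerivWithin_le hderiv hbound
    (log_le_log hy hyB) (log_le_log hx hxB)
  rwa [hH x hx, hH y hy, Real.norm_eq_abs, Real.norm_eq_abs] at hmvt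

lemma div_one_add_mul_le_div_one_add_mul {c x y : ℝ} (hc : 0 ≤ c) (hx : 0 ≤ x)
    (hxy : x ≤ y) :
    x / (1 + c * x) ≤ y / (1 + c * y) := by
  rw [div_le_div_iff₀ (by positivity) (by nlinarith)]
  nlinarith

lemma List.exists_eq_append_cons_of_countP_pos {α : Type*} {p : α → Bool} {w : List α}
    (h : 0 < w.countP p) : ∃ u a r, w = u ++ a :: r ∧ p a ∧ ∀ b ∈ r, p b = false := by
  induction w using List.reverseRecOn with
  | nil => simp at h
  | append_singleton w a ih =>
    by_cases ha : p a
    · exact ⟨w, a, [], rfl, ha, by simp⟩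
    · obtain ⟨u, b, r, rfl, hb, hr⟩ := ih (by simpa [List.countP_append, ha] using h)
      exact ⟨u, b, r ++ [a], by simp, hb,
        by simpa [or_imp, forall_and] using ⟨hr, Bool.eq_false_iff.2 ha⟩⟩

lemma List.le_countP_or_exists_infix {α : Type*} (p : α → Bool) (q n : ℕ) {w : List α}
    (hw : q * n ≤ w.length) :
    n ≤ w.countP p ∨ ∃ v, v <:+: w ∧ v.length = q ∧ ∀ a ∈ v, p a = false := by
  induction n generalizing w with
  | zero => exact Or.inl (Nat.zero_le _)
  | succ n ih =>
    by_cases hrun : ∀ a ∈ w.take q, p a = false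
    · refine Or.inr ⟨w.take q, (List.take_prefix q w).isInfix, ?_, hrun⟩
      rw [List.length_take]
      exact min_eq_left (le_trans (Nat.le_mul_of_pos_right q n.succ_pos) hw)
    · push Not at hrun
      have hpos : 0 < (w.take q).countP p := List.countP_pos_iff.2 (by simpa using hrun)
      rcases ih (w := w.drop q) (by rw [List.length_drop, Nat.mul_succ] at *; omega) with
        hcount | ⟨v, hv, hvl, hvp⟩
      · left
        rw [← List.take_append_drop q w, List.countP_append]
        omega
      · exact Or.inr ⟨v, hv.trans (List.drop_suffix q w).isInfix, hvl, hvp⟩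

noncomputable def ratioMap (A : Matrix (Fin 2) (Fin 2) ℝ) (v : ℝ) : ℝ :=
  (A 1 0 + A 1 1 * v) / (A 0 0 + A 0 1 * v)

section RatioMap

variable {A : Matrix (Fin 2) (Fin 2) ℝ}

lemma ratioMap_mulVec {X : Fin 2 → ℝ} (hX : X 0 ≠ 0) :
    (A *ᵥ X) 1 / (A *ᵥ X) 0 = ratioMap A (X 1 / X 0) := by
  have hdiv : ∀ p q : ℝ, p + q * (X 1 / X 0) = (p * X 0 + q * X 1) / X 0 := fun p q => by
    field_simp
  simp only [ratioMap, mulVec, dotProduct, Fin.sum_univ_two, hdiv, div_div_div_cancel_right₀ hX]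

lemma mulVec_zero_pos (hA : ∀ i j, 0 ≤ A i j) (ha : 0 < A 0 0) {X : Fin 2 → ℝ}
    (hX0 : 0 < X 0) (hX1 : 0 ≤ X 1) : 0 < (A *ᵥ X) 0 := by
  simp only [mulVec, dotProduct, Fin.sum_univ_two]
  exact add_pos_of_pos_of_nonneg (mul_pos ha hX0) (mul_nonneg (hA 0 1) hX1)

lemma mulVec_one_nonneg (hA : ∀ i j, 0 ≤ A i j) {X : Fin 2 → ℝ}
    (hX0 : 0 ≤ X 0) (hX1 : 0 ≤ X 1) : 0 ≤ (A *ᵥ X) 1 := by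
  simp only [mulVec, dotProduct, Fin.sum_univ_two]
  exact add_nonneg (mul_nonneg (hA 1 0) hX0) (mul_nonneg (hA 1 1) hX1)

lemma ratioMap_nonneg (hA : ∀ i j, 0 ≤ A i j) (ha : 0 < A 0 0) {v : ℝ} (hv : 0 ≤ v) :
    0 ≤ ratioMap A v :=
  div_nonneg (add_nonneg (hA 1 0) (mul_nonneg (hA 1 1) hv))
    (add_nonneg ha.le (mul_nonneg (hA 0 1) hv))

lemma ratioMap_pos (hA : ∀ i j, 0 ≤ A i j) (ha : 0 < A 0 0) (hc : 0 < A 1 0) {v : ℝ}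
    (hv : 0 ≤ v) : 0 < ratioMap A v :=
  div_pos (add_pos_of_pos_of_nonneg hc (mul_nonneg (hA 1 1) hv))
    (add_pos_of_pos_of_nonneg ha (mul_nonneg (hA 0 1) hv))

lemma ratioMap_pos_of_pos (hA : ∀ i j, 0 ≤ A i j) (ha : 0 < A 0 0) (hd : 0 < A 1 1) {v : ℝ}
    (hv : 0 < v) : 0 < ratioMap A v :=
  div_pos (add_pos_of_nonneg_of_pos (hA 1 0) (mul_pos hd hv))
    (add_pos_of_pos_of_nonneg ha (mul_nonneg (hA 0 1) hv.le))

lemma ratioMap_eq_zero (hc : A 1 0 = 0) (hd : A 1 1 = 0) (v : ℝ) : ratioMap A v = 0 := by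
  simp [ratioMap, hc, hd]

lemma abs_log_ratioMap_sub_le (hA : ∀ i j, 0 ≤ A i j) (ha : 0 < A 0 0) (hc : A 1 0 = 0)
    (hd : 0 < A 1 1) {x y : ℝ} (hx : 0 < x) (hy : 0 < y) :
    |log (ratioMap A x) - log (ratioMap A y)| ≤ |log x - log y| := by
  have hS : 0 < A 0 0 * A 1 1 + A 0 1 * 0 := by rw [mul_zero, add_zero]; exact mul_pos ha hd
  have hB : 0 < max x y := lt_max_of_lt_left hx
  have h := abs_log_div_sub_le_mul_abs_log_sub ha (hA 0 1) le_rfl (hA 1 1) hS hB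
    hx (le_max_left x y) hy (le_max_right x y)
  simp only [mul_zero, add_zero] at h
  rwa [div_self (by positivity), one_mul, ← hc] at h

lemma eventually_ratioMap_le (hA : ∀ i j, 0 ≤ A i j) (ha : 0 < A 0 0)
    (hb : A 0 1 = 0 → A 1 1 < A 0 0) :
    ∀ᶠ B in atTop, ∀ v, 0 ≤ v → v ≤ B → ratioMap A v ≤ B := by
  rcases (hA 0 1).eq_or_lt with hb0 | hb
  · filter_upwards [eventually_ge_atTop (A 1 0 / (A 0 0 - A 1 1))] with B hB v _ hvB
    rw [div_le_iff₀ (sub_pos.2 (hb hb0.symm))] at hB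
    rw [ratioMap, ← hb0, zero_mul, add_zero, div_le_iff₀ ha]
    nlinarith [mul_le_mul_of_nonneg_left hvB (hA 1 1)]
  · filter_upwards [eventually_ge_atTop (max (A 1 0 / A 0 0) (A 1 1 / A 0 1))] with B hB v hv _
    have hc : A 1 0 ≤ B * A 0 0 := (div_le_iff₀ ha).1 ((le_max_left _ _).trans hB)
    have hd : A 1 1 ≤ B * A 0 1 := (div_le_iff₀ hb).1 ((le_max_right _ _).trans hB)
    rw [ratioMap, div_le_iff₀ (by positivity)]
    nlinarith [mul_le_mul_of_nonneg_right hd hv]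

lemma eventually_ratioMap_le_div (hA : ∀ i j, 0 ≤ A i j) (ha : 0 < A 0 0) (hc : A 1 0 = 0)
    (hda : A 1 1 ≤ A 0 0) (hb : A 0 1 = 0 → A 1 1 < A 0 0) {B : ℝ} (hB : 0 ≤ B) :
    ∀ᶠ δ in 𝓝[>] 0, ∀ v, 0 ≤ v → v ≤ B → ratioMap A v ≤ v / (1 + δ * v) := by
  have hgap : 0 < A 0 0 - A 1 1 + A 0 1 := by
    rcases (hA 0 1).eq_or_lt with hb0 | hb0
    · linarith [hb hb0.symm]
    · linarith
  have hK : 0 < (A 1 1 + 1) * (B + 1) := by nlinarith [hA 1 1]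
  filter_upwards [Ioo_mem_nhdsGT (div_pos hgap hK)] with δ ⟨hδ, hδK⟩ v hv hvB
  -- With `t = d v / ((d + 1)(B + 1)) ≤ min 1 v`, the bound on `δ` gives `d δ v ≤ a - d + b v`.
  set t := A 1 1 * v / ((A 1 1 + 1) * (B + 1))
  have ht0 : 0 ≤ t := div_nonneg (mul_nonneg (hA 1 1) hv) hK.le
  have ht1 : t ≤ 1 := (div_le_one hK).2 (by nlinarith [hA 1 1])
  have htv : t ≤ v := (div_le_iff₀ hK).2 (by nlinarith [mul_nonneg (mul_nonneg hv (hA 1 1)) hB])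
  have hδt : A 1 1 * δ * v = δ * ((A 1 1 + 1) * (B + 1)) * t := by
    have : A 1 1 + 1 ≠ 0 := by linarith [hA 1 1]
    simp only [t]
    field_simp
  have hδK' : δ * ((A 1 1 + 1) * (B + 1)) ≤ A 0 0 - A 1 1 + A 0 1 :=
    ((lt_div_iff₀ hK).1 hδK).le
  have key : A 1 1 * (1 + δ * v) ≤ A 0 0 + A 0 1 * v := by
    nlinarith [mul_le_mul_of_nonneg_right hδK' ht0,
      mul_le_mul_of_nonneg_left ht1 (sub_nonneg.2 hda),
      mul_le_mul_of_nonneg_left htv (hA 0 1)]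
  rw [ratioMap, hc, zero_add, div_le_div_iff₀ (by nlinarith [hA 0 1]) (by positivity)]
  nlinarith [mul_le_mul_of_nonneg_left key hv]

lemma eventually_abs_log_ratioMap_sub_le_mul_abs_sub (hA : ∀ i j, 0 ≤ A i j) (ha : 0 < A 0 0)
    (hc : 0 < A 1 0) :
    ∀ᶠ κ in atTop, ∀ x y, 0 ≤ x → 0 ≤ y →
      |log (ratioMap A x) - log (ratioMap A y)| ≤ κ * |x - y| := by
  filter_upwards [eventually_ge_atTop (A 1 1 / A 1 0 + A 0 1 / A 0 0)] with κ hκ x y hx hy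
  exact (abs_log_div_sub_le_mul_abs_sub ha (hA 0 1) hc (hA 1 1) hx hy).trans
    (mul_le_mul_of_nonneg_right hκ (abs_nonneg _))

lemma eventually_abs_log_ratioMap_sub_le_mul_abs_log_sub (hA : ∀ i j, 0 ≤ A i j)
    (ha : 0 < A 0 0) (hc : 0 < A 1 0) (hcol : 0 < A 0 1 + A 1 1) {B : ℝ} (hB : 0 < B) :
    ∀ᶠ θ in 𝓝[<] 1, ∀ x y, 0 < x → x ≤ B → 0 < y → y ≤ B →
      |log (ratioMap A x) - log (ratioMap A y)| ≤ θ * |log x - log y| := by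
  set S := A 0 0 * A 1 1 + A 0 1 * A 1 0
  have hS : 0 < S := by
    rcases (hA 1 1).eq_or_lt with hd | hd
    · have : 0 < A 0 1 := by linarith
      simp only [S, ← hd, mul_zero, zero_add]
      positivity
    · nlinarith [mul_pos ha hd, mul_nonneg (hA 0 1) hc.le]
  have hθ : S * B / (S * B + A 0 0 * A 1 0) < 1 :=
    (div_lt_one (by positivity)).2 (lt_add_of_pos_right _ (mul_pos ha hc))
  filter_upwards [Ioo_mem_nhdsLT hθ] with θ hθ' x y hx hxB hy hyB
  exact (abs_log_div_sub_le_mul_abs_log_sub ha (hA 0 1) hc.le (hA 1 1) hS hB hx hxB hy hyB).trans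
    (mul_le_mul_of_nonneg_right hθ'.1.le (abs_nonneg _))

end RatioMap

-- The disjunct `x = y` absorbs letters with `c = d = 0`, which send everything to `0`.
def LogClose (t x y : ℝ) : Prop :=
  x = y ∨ 0 < x ∧ 0 < y ∧ |log x - log y| ≤ t

lemma LogClose.mono {t t' x y : ℝ} (h : LogClose t x y) (ht : t ≤ t') : LogClose t' x y :=
  h.imp_right fun ⟨hx, hy, hxy⟩ => ⟨hx, hy, hxy.trans ht⟩

lemma LogClose.abs_inv_one_add_sub_le {t x y : ℝ} (h : LogClose t x y) (ht : 0 ≤ t) :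
    |(1 + x)⁻¹ - (1 + y)⁻¹| ≤ t := by
  rcases h with rfl | ⟨hx, hy, hxy⟩
  · simpa using ht
  · exact (abs_inv_one_add_sub_le_abs_log_sub hx hy).trans hxy

section RatioMapList

variable {ι : Type*} {M : ι → Matrix (Fin 2) (Fin 2) ℝ}

variable (M) in
noncomputable def ratioMapList (w : List ι) (v : ℝ) : ℝ :=
  w.foldr (fun k => ratioMap (M k)) v

@[simp]
lemma ratioMapList_nil (v : ℝ) : ratioMapList M [] v = v := rfl

@[simp]
lemma ratioMapList_cons (k : ι) (w : List ι) (v : ℝ) :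
    ratioMapList M (k :: w) v = ratioMap (M k) (ratioMapList M w v) := rfl

lemma ratioMapList_append (u w : List ι) (v : ℝ) :
    ratioMapList M (u ++ w) v = ratioMapList M u (ratioMapList M w v) :=
  List.foldr_append

lemma ratioMapList_map_range (ω : ℕ → ι) {N n : ℕ} (hN : N ≤ n) (v : ℝ) :
    ratioMapList M ((List.range n).map ω) v =
      ratioMapList M ((List.range N).map ω)
        (ratioMapList M (((List.range n).map ω).drop N) v) := by
  conv_lhs => rw [← List.take_append_drop N ((List.range n).map ω)]
  rw [ratioMapList_append, ← List.map_take, List.take_range, min_eq_left hN]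

lemma list_prod_mulVec_ratio (hA : ∀ k i j, 0 ≤ M k i j) (ha : ∀ k, 0 < M k 0 0) (w : List ι)
    {X : Fin 2 → ℝ} (hX0 : 0 < X 0) (hX1 : 0 ≤ X 1) :
    0 < ((w.map M).prod *ᵥ X) 0 ∧ 0 ≤ ((w.map M).prod *ᵥ X) 1 ∧
      ((w.map M).prod *ᵥ X) 1 / ((w.map M).prod *ᵥ X) 0 = ratioMapList M w (X 1 / X 0) := by
  induction w with
  | nil => simpa using ⟨hX0, hX1⟩
  | cons k w ih =>
    obtain ⟨hY0, hY1, hY⟩ := ih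
    rw [List.map_cons, List.prod_cons, ← mulVec_mulVec, ratioMapList_cons, ← hY]
    exact ⟨mulVec_zero_pos (hA k) (ha k) hY0 hY1, mulVec_one_nonneg (hA k) hY0.le hY1,
      ratioMap_mulVec hY0.ne'⟩

end RatioMapList

structure RatioBounds {ι : Type*} (M : ι → Matrix (Fin 2) (Fin 2) ℝ) (B δ κ θ : ℝ) :
    Prop where
  nonneg : ∀ k i j, 0 ≤ M k i j
  corner_pos : ∀ k, 0 < M k 0 0
  bound_pos : 0 < B
  mapsTo : ∀ k v, 0 ≤ v → v ≤ B → ratioMap (M k) v ≤ B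
  δ_pos : 0 < δ
  le_div_of_null : ∀ k, M k 1 0 = 0 → ∀ v, 0 ≤ v → v ≤ B →
    ratioMap (M k) v ≤ v / (1 + δ * v)
  one_le_κ : 1 ≤ κ
  lipschitz_of_pos : ∀ k, 0 < M k 1 0 → ∀ x y, 0 ≤ x → 0 ≤ y →
    |log (ratioMap (M k) x) - log (ratioMap (M k) y)| ≤ κ * |x - y|
  θ_nonneg : 0 ≤ θ
  θ_lt_one : θ < 1
  contract_of_pos : ∀ k, 0 < M k 1 0 → ∀ x y, 0 < x → x ≤ B → 0 < y → y ≤ B →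
    |log (ratioMap (M k) x) - log (ratioMap (M k) y)| ≤ θ * |log x - log y|

namespace RatioBounds

variable {ι : Type*} {M : ι → Matrix (Fin 2) (Fin 2) ℝ} {B δ κ θ : ℝ}

lemma ratioMapList_mem (h : RatioBounds M B δ κ θ) (w : List ι) {x : ℝ} (hx : x ∈ Icc 0 B) :
    ratioMapList M w x ∈ Icc 0 B := by
  induction w with
  | nil => exact hx
  | cons k w ih =>
    exact ⟨ratioMap_nonneg (h.nonneg k) (h.corner_pos k) ih.1, h.mapsTo k _ ih.1 ih.2⟩

lemma eq_zero_of_not_pos (h : RatioBounds M B δ κ θ) {k : ι} (hk : ¬0 < M k 1 0) :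
    M k 1 0 = 0 :=
  le_antisymm (not_lt.1 hk) (h.nonneg k 1 0)

lemma ratioMapList_le_of_null (h : RatioBounds M B δ κ θ) {w : List ι}
    (hw : ∀ k ∈ w, M k 1 0 = 0) {x : ℝ} (hx : x ∈ Icc 0 B) :
    ratioMapList M w x ≤ x / (1 + w.length * δ * x) := by
  induction w with
  | nil => simp
  | cons k w ih =>
    have hy := h.ratioMapList_mem w hx
    calc ratioMapList M (k :: w) x ≤ ratioMapList M w x / (1 + δ * ratioMapList M w x) :=
          h.le_div_of_null k (hw k List.mem_cons_self) _ hy.1 hy.2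
      _ ≤ x / (1 + w.length * δ * x) / (1 + δ * (x / (1 + w.length * δ * x))) :=
          div_one_add_mul_le_div_one_add_mul h.δ_pos.le hy.1
            (ih fun j hj => hw j (List.mem_cons_of_mem k hj))
      _ = x / (1 + (k :: w).length * δ * x) := by
          have hD : (1 + w.length * δ * x : ℝ) ≠ 0 := by positivity [hx.1, h.δ_pos.le]
          rw [div_div, mul_add, mul_one, mul_left_comm, mul_div_cancel₀ _ hD, List.length_cons,
            Nat.cast_succ]
          ring

lemma ratioMapList_mem_of_null (h : RatioBounds M B δ κ θ) {w : List ι}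
    (hw : ∀ k ∈ w, M k 1 0 = 0) {W x : ℝ} (hWB : W ≤ B) (hx : x ∈ Icc 0 W) :
    ratioMapList M w x ∈ Icc 0 W := by
  have hxB : x ∈ Icc 0 B := ⟨hx.1, hx.2.trans hWB⟩
  refine ⟨(h.ratioMapList_mem w hxB).1, (h.ratioMapList_le_of_null hw hxB).trans ?_⟩
  exact (div_le_self hx.1 (le_add_of_nonneg_right (by positivity [h.δ_pos.le, hx.1]))).trans hx.2

lemma logClose_ratioMap_of_pos (h : RatioBounds M B δ κ θ) {k : ι} (hk : 0 < M k 1 0)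
    {W x y : ℝ} (hx : x ∈ Icc 0 W) (hy : y ∈ Icc 0 W) :
    LogClose (κ * W) (ratioMap (M k) x) (ratioMap (M k) y) :=
  Or.inr ⟨ratioMap_pos (h.nonneg k) (h.corner_pos k) hk hx.1,
    ratioMap_pos (h.nonneg k) (h.corner_pos k) hk hy.1,
    (h.lipschitz_of_pos k hk x y hx.1 hy.1).trans (mul_le_mul_of_nonneg_left
      (abs_sub_le_of_nonneg_of_le hx.1 hx.2 hy.1 hy.2) (zero_le_one.trans h.one_le_κ))⟩

lemma logClose_ratioMap (h : RatioBounds M B δ κ θ) (k : ι) {t x y : ℝ}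
    (hxy : LogClose t x y) (hx : x ≤ B) (hy : y ≤ B) :
    LogClose ((if 0 < M k 1 0 then θ else 1) * t) (ratioMap (M k) x) (ratioMap (M k) y) := by
  rcases hxy with rfl | ⟨hx0, hy0, hlog⟩
  · exact Or.inl rfl
  have hA := h.nonneg k
  have ha := h.corner_pos k
  by_cases hk : 0 < M k 1 0
  · rw [if_pos hk]
    exact Or.inr ⟨ratioMap_pos hA ha hk hx0.le, ratioMap_pos hA ha hk hy0.le,
      (h.contract_of_pos k hk x y hx0 hx hy0 hy).trans
        (mul_le_mul_of_nonneg_left hlog h.θ_nonneg)⟩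
  rw [if_neg hk, one_mul]
  have hc := h.eq_zero_of_not_pos hk
  rcases (hA 1 1).eq_or_lt with hd | hd
  · exact Or.inl (by rw [ratioMap_eq_zero hc hd.symm, ratioMap_eq_zero hc hd.symm])
  · exact Or.inr ⟨ratioMap_pos_of_pos hA ha hd hx0, ratioMap_pos_of_pos hA ha hd hy0,
      (abs_log_ratioMap_sub_le hA ha hc hd hx0 hy0).trans hlog⟩

lemma logClose_ratioMapList (h : RatioBounds M B δ κ θ) (w : List ι) {t x y : ℝ}
    (hxy : LogClose t x y) (hx : x ∈ Icc 0 B) (hy : y ∈ Icc 0 B) :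
    LogClose (θ ^ w.countP (fun k => 0 < M k 1 0) * t)
      (ratioMapList M w x) (ratioMapList M w y) := by
  induction w with
  | nil => simpa using hxy
  | cons k w ih =>
    refine (h.logClose_ratioMap k ih (h.ratioMapList_mem w hx).2
      (h.ratioMapList_mem w hy).2).mono (le_of_eq ?_)
    by_cases hk : 0 < M k 1 0 <;> simp [hk, pow_succ]
    ring

lemma logClose_ratioMapList_of_lt_countP (h : RatioBounds M B δ κ θ) {u : List ι} {p : ℕ}
    (hp : p < u.countP (fun k => 0 < M k 1 0)) {W x y : ℝ} (hWB : W ≤ B)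
    (hx : x ∈ Icc 0 W) (hy : y ∈ Icc 0 W) :
    LogClose (θ ^ p * (κ * W)) (ratioMapList M u x) (ratioMapList M u y) := by
  obtain ⟨u, k, r, rfl, hk, hr⟩ :=
    List.exists_eq_append_cons_of_countP_pos (p.zero_le.trans_lt hp)
  have hk : 0 < M k 1 0 := by simpa using hk
  have hr : ∀ j ∈ r, M j 1 0 = 0 := fun j hj => h.eq_zero_of_not_pos (by simpa using hr j hj)
  have hcount : p ≤ u.countP (fun k => 0 < M k 1 0) := by
    rw [List.countP_append, List.countP_cons,
      List.countP_eq_zero (l := r).2 fun j hj => by simp [hr j hj]] at hp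
    simp only [hk, decide_true, if_true] at hp
    omega
  have hW : ∀ z ∈ Icc 0 W, ratioMapList M r z ∈ Icc 0 W := fun z hz =>
    h.ratioMapList_mem_of_null hr hWB hz
  have hκW : 0 ≤ κ * W := mul_nonneg (zero_le_one.trans h.one_le_κ) (hx.1.trans hx.2)
  simp only [ratioMapList_append, ratioMapList_cons]
  have hB : ∀ z ∈ Icc 0 W, ratioMap (M k) (ratioMapList M r z) ∈ Icc 0 B := fun z hz =>
    h.ratioMapList_mem [k] ⟨(hW z hz).1, (hW z hz).2.trans hWB⟩
  exact (h.logClose_ratioMapList u (h.logClose_ratioMap_of_pos hk (hW x hx) (hW y hy))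
    (hB x hx) (hB y hy)).mono
    (mul_le_mul_of_nonneg_right (pow_le_pow_of_le_one h.θ_nonneg h.θ_lt_one.le hcount) hκW)

lemma abs_inv_one_add_ratioMapList_sub_le (h : RatioBounds M B δ κ θ) {p q : ℕ} {w : List ι}
    (hw : q * (p + 1) ≤ w.length) {x y : ℝ} (hx : x ∈ Icc 0 B) (hy : y ∈ Icc 0 B) :
    |(1 + ratioMapList M w x)⁻¹ - (1 + ratioMapList M w y)⁻¹| ≤
      max (θ ^ p * (κ * B)) (κ * (B / (1 + q * δ * B))) := by
  have hκ : 0 ≤ κ := zero_le_one.trans h.one_le_κ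
  rcases List.le_countP_or_exists_infix (fun k => 0 < M k 1 0) q (p + 1) hw with
    hcount | ⟨v, ⟨u, r, rfl⟩, hvl, hv⟩
  · exact le_max_of_le_left <| (h.logClose_ratioMapList_of_lt_countP hcount le_rfl hx hy
      ).abs_inv_one_add_sub_le (by positivity [h.θ_nonneg, hκ, h.bound_pos.le])
  set W := B / (1 + q * δ * B)
  have hW0 : 0 ≤ W := by positivity [h.bound_pos.le, h.δ_pos.le]
  have hWB : W ≤ B := div_le_self h.bound_pos.le
    (le_add_of_nonneg_right (by positivity [h.bound_pos.le, h.δ_pos.le]))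
  have hv : ∀ k ∈ v, M k 1 0 = 0 := fun k hk => h.eq_zero_of_not_pos (by simpa using hv k hk)
  have hrun : ∀ z ∈ Icc 0 B, ratioMapList M (v ++ r) z ∈ Icc 0 W := fun z hz => by
    have hr := h.ratioMapList_mem r hz
    rw [ratioMapList_append]
    refine ⟨(h.ratioMapList_mem v hr).1, (h.ratioMapList_le_of_null hv hr).trans ?_⟩
    rw [hvl]
    exact div_one_add_mul_le_div_one_add_mul (by positivity [h.δ_pos.le]) hr.1 hr.2
  refine le_max_of_le_right ?_
  rw [List.append_assoc, ratioMapList_append, ratioMapList_append u]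
  rcases (u.countP (fun k => 0 < M k 1 0)).eq_zero_or_pos with hu | hu
  · have hu : ∀ k ∈ u, M k 1 0 = 0 := fun k hk =>
      h.eq_zero_of_not_pos (by simpa using List.countP_eq_zero.1 hu k hk)
    have hxu := h.ratioMapList_mem_of_null hu hWB (hrun x hx)
    have hyu := h.ratioMapList_mem_of_null hu hWB (hrun y hy)
    exact (abs_inv_one_add_sub_le hxu.1 hyu.1).trans
      ((abs_sub_le_of_nonneg_of_le hxu.1 hxu.2 hyu.1 hyu.2).trans
        (le_mul_of_one_le_left hW0 h.one_le_κ))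
  · simpa using (h.logClose_ratioMapList_of_lt_countP hu hWB (hrun x hx) (hrun y hy)
      ).abs_inv_one_add_sub_le (by positivity [h.θ_nonneg, hκ, hW0])

lemma exists_forall_abs_inv_one_add_ratioMapList_sub_lt (h : RatioBounds M B δ κ θ) {ε : ℝ}
    (hε : 0 < ε) :
    ∃ N, ∀ w : List ι, N ≤ w.length → ∀ x ∈ Icc 0 B, ∀ y ∈ Icc 0 B,
      |(1 + ratioMapList M w x)⁻¹ - (1 + ratioMapList M w y)⁻¹| < ε := by
  have hκB : 0 < κ * B := mul_pos (zero_lt_one.trans_le h.one_le_κ) h.bound_pos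
  obtain ⟨p, hp⟩ := exists_pow_lt_of_lt_one (div_pos hε hκB) h.θ_lt_one
  obtain ⟨q, hq⟩ := exists_nat_gt (κ / (ε * δ))
  refine ⟨q * (p + 1), fun w hw x hx y hy =>
    (h.abs_inv_one_add_ratioMapList_sub_le hw hx hy).trans_lt (max_lt ?_ ?_)⟩
  · exact (lt_div_iff₀ hκB).1 hp
  · have hqδ : κ < ε * (q * δ) := by
      rw [div_lt_iff₀ (mul_pos hε h.δ_pos)] at hq
      linarith
    rw [mul_div_assoc', div_lt_iff₀ (by positivity [h.bound_pos.le, h.δ_pos.le])]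
    nlinarith [h.bound_pos]

end RatioBounds

lemma exists_ratioBounds {ι : Type*} [Finite ι] {M : ι → Matrix (Fin 2) (Fin 2) ℝ}
    (hM : ∀ k, ColAllowable (M k)) (h1 : ∀ k, M k 1 0 = 0 → M k 1 1 ≤ M k 0 0)
    (h2 : ∀ k, M k 0 1 = 0 → M k 1 1 < M k 0 0) (h3 : ∀ k, M k 0 0 ≠ 0) (v₀ : ℝ) :
    ∃ B δ κ θ, v₀ ≤ B ∧ RatioBounds M B δ κ θ := by
  have hA : ∀ k i j, 0 ≤ M k i j := fun k => (hM k).1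
  have ha : ∀ k, 0 < M k 0 0 := fun k => (hA k 0 0).lt_of_ne' (h3 k)
  obtain ⟨B, hB, hB1, hv₀⟩ := ((eventually_all.2 fun k =>
    eventually_ratioMap_le (hA k) (ha k) (h2 k)).and
    ((eventually_ge_atTop 1).and (eventually_ge_atTop v₀))).exists
  have hB0 : 0 < B := zero_lt_one.trans_le hB1
  obtain ⟨δ, hδ, hδ0⟩ := ((eventually_all.2 fun k => eventually_imp_distrib_left.2 fun hc =>
    eventually_ratioMap_le_div (hA k) (ha k) hc (h1 k hc) (h2 k) hB0.le).and
    self_mem_nhdsWithin).exists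
  obtain ⟨κ, hκ, hκ1⟩ := ((eventually_all.2 fun k => eventually_imp_distrib_left.2 fun hc =>
    eventually_abs_log_ratioMap_sub_le_mul_abs_sub (hA k) (ha k) hc).and
    (eventually_ge_atTop 1)).exists
  obtain ⟨θ, hθ, hθ0, hθ1⟩ := ((eventually_all.2 fun k => eventually_imp_distrib_left.2 fun hc =>
    eventually_abs_log_ratioMap_sub_le_mul_abs_log_sub (hA k) (ha k) hc (hM k).2.2 hB0).and
    (Ioo_mem_nhdsLT zero_lt_one)).exists
  exact ⟨B, δ, κ, θ, hv₀, hA, ha, hB0, hB, hδ0, hδ, hκ1, hκ, hθ0.le, hθ1, hθ⟩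

lemma nv_eq_inv_one_add_div {X : Fin 2 → ℝ} (hX : X 0 ≠ 0) : nv X = (1 + X 1 / X 0)⁻¹ := by
  rw [nv, one_add_div hX, inv_div]

lemma dist_Nv (X Y : Fin 2 → ℝ) : dist (Nv X) (Nv Y) = dist (nv X) (nv Y) := by
  refine le_antisymm ((dist_pi_le_iff dist_nonneg).2 fun i => ?_)
    (by simpa [Nv] using dist_le_pi_dist (Nv X) (Nv Y) 0)
  fin_cases i
  · simp [Nv]
  · simp [Nv, Real.dist_eq, sub_add]

lemma UniformCauchySeqOn.exists_tendstoUniformly {α β : Type*} [UniformSpace β]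
    [CompleteSpace β] {F : ℕ → α → β} (hF : UniformCauchySeqOn F atTop univ) :
    ∃ f, TendstoUniformly F f atTop := by
  choose f hf using fun x => cauchySeq_tendsto_of_complete (hF.cauchySeq (mem_univ x))
  exact ⟨f, tendstoUniformlyOn_univ.1 (hF.tendstoUniformlyOn_of_tendsto fun x _ => hf x)⟩

theorem stmt11 (s : ℕ) (M : Fin s → Matrix (Fin 2) (Fin 2) ℝ)
    (hM : ∀ k, ColAllowable (M k))
    (h1 : ∀ k, M k 1 0 = 0 → M k 1 1 ≤ M k 0 0)
    (h2 : ∀ k, M k 0 1 = 0 → M k 1 1 < M k 0 0)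
    (h3 : ∀ k, M k 0 0 ≠ 0) :
    ∀ V : Fin 2 → ℝ, 0 < V 0 → 0 < V 1 →
      ∃ F : (ℕ → Fin s) → (Fin 2 → ℝ),
        TendstoUniformly (fun n ω => Nv ((Pprod M ω n).mulVec V)) F atTop := by
  intro V hV0 hV1
  obtain ⟨B, δ, κ, θ, hvB, h⟩ := exists_ratioBounds hM h1 h2 h3 (V 1 / V 0)
  have hv : V 1 / V 0 ∈ Icc 0 B := ⟨by positivity, hvB⟩
  have hnv : ∀ n ω, nv ((Pprod M ω n) *ᵥ V) =
      (1 + ratioMapList M ((List.range n).map ω) (V 1 / V 0))⁻¹ := fun n ω => by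
    obtain ⟨hP0, -, hP⟩ :=
      list_prod_mulVec_ratio h.nonneg h.corner_pos ((List.range n).map ω) hV0 hV1.le
    have hprod : Pprod M ω n = (((List.range n).map ω).map M).prod := by
      simp [Pprod, Function.comp_def]
    rw [hprod, nv_eq_inv_one_add_div hP0.ne', hP]
  refine UniformCauchySeqOn.exists_tendstoUniformly
    (Metric.uniformCauchySeqOn_iff.2 fun ε hε => ?_)
  obtain ⟨N, hN⟩ := h.exists_forall_abs_inv_one_add_ratioMapList_sub_lt hε
  refine ⟨N, fun m hm n hn ω _ => ?_⟩
  rw [dist_Nv, Real.dist_eq, hnv, hnv, ratioMapList_map_range ω hm, ratioMapList_map_range ω hn]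
  exact hN _ (by simp) _ (h.ratioMapList_mem _ hv) _ (h.ratioMapList_mem _ hv)
end
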